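/- arXiv:0910.0120 — 3 statements merged into one kernel-verified Lean document; each statement's English description precedes it below -/
import Mathlib

section
/- With e_\delta(n) defined as the Stasheff-polytope sum e_\delta(n) = \sum_{\lambda \vdash n-2} P(\lambda) \prod_i e(i+2)^{\lambda_i} (where e(m) = \prod_{j=2}^{m-2}(q-j)), the ordinary generating series f(x) = x - \sum_{n\ge 2} e(n+1) x^n and f_\delta(x) = x + \sum_{n\ge 2} e_\delta(n+1) x^n satisfy f(f_\delta(x)) = f_\delta(f(x)) = x in \mathbb{Q}[q][[x]]. -/
open Finset

/-- `e(m) = ∏_{j=2}^{m-2} (q - j)`, the Poincaré polynomial of `M_{0,m}`. -/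
noncomputable def eOpen (m : ℕ) : Polynomial ℚ :=
  ∏ j ∈ Finset.Icc 2 (m - 2), (Polynomial.X - (j : Polynomial ℚ))

/-- `P(λ) = (n-2+∑ᵢ λᵢ)! / ((n-1)! ∏ᵢ λᵢ!)` for a partition `λ ⊢ n-2`. -/
noncomputable def Pcoeff (n : ℕ) (lam : Nat.Partition (n - 2)) : ℚ :=
  ((n - 2 + lam.parts.card).factorial : ℚ) /
    (((n - 1).factorial : ℚ) * ∏ i ∈ Finset.Icc 1 (n - 2), ((lam.parts.count i).factorial : ℚ))

/-- `e_δ(n) = ∑_{λ ⊢ n-2} P(λ) ∏ᵢ e(i+2)^{λᵢ}`. -/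
noncomputable def eDelta (n : ℕ) : Polynomial ℚ :=
  ∑ lam : Nat.Partition (n - 2),
    Pcoeff n lam • ∏ i ∈ Finset.Icc 1 (n - 2), (eOpen (i + 2)) ^ (lam.parts.count i)

open PowerSeries in
/-- Composition of formal power series (intended for second argument with zero
constant coefficient). -/
noncomputable def PS.comp {R : Type*} [CommRing R] (f g : PowerSeries R) : PowerSeries R :=
  PowerSeries.mk fun n => ∑ k ∈ Finset.range (n + 1), (coeff k f) * coeff n (g ^ k)

/-- `f(x) = x - ∑_{n≥2} e(n+1) xⁿ`. -/
noncomputable def fSeries : PowerSeries (Polynomial ℚ) :=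
  PowerSeries.mk fun n => if n = 0 then 0 else if n = 1 then 1 else -(eOpen (n + 1))

/-- `f_δ(x) = x + ∑_{n≥2} e_δ(n+1) xⁿ`. -/
noncomputable def fDeltaSeries : PowerSeries (Polynomial ℚ) :=
  PowerSeries.mk fun n => if n = 0 then 0 else if n = 1 then 1 else eDelta (n + 1)

/-!
Write `f = X (1 - A)` with `A = ∑_{i ≥ 1} e(i+2) Xⁱ` and let `u = (1 - A)⁻¹`. Since
`f = X + O(X²)`, it has a two-sided compositional inverse `g`, and it suffices to show `g = f_δ`.

Lagrange inversion gives `(n+1) [X^{n+1}] g = [Xⁿ] u^{n+1}`: pairing `X = g(f) = ∑ₖ gₖ fᵏ` with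
`u^{n+2} f'` in degree `n+1` isolates `g_{n+1}`, since `[X^{n+1}] (fᵏ u^{n+2} f')` is `0` for
`k ≤ n` and `1` for `k = n+1` (a formal stand-in for the residues of `f^{k-n-2} f'`).
Expanding `u^{n+1} = ∑ⱼ C(n+j, n) Aʲ` and `Aʲ` by the multinomial theorem turns `[Xⁿ] u^{n+1}`
into a sum over partitions `λ ⊢ n` of `C(n+ℓ, n) ℓ! / ∏ λᵢ!` times `∏ e(i+2)^{λᵢ}`, where
`ℓ = ∑ λᵢ`; dividing by `n+1` gives exactly `P(λ)`.
-/

open PowerSeries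
open scoped Nat

theorem Nat.Partition.card_parts_le {n : ℕ} (p : n.Partition) : p.parts.card ≤ n := by
  simpa [p.parts_sum] using Multiset.card_nsmul_le_sum (s := p.parts) (a := 1) fun _ ↦ p.parts_pos

theorem Nat.Partition.mem_Icc_of_mem_parts {n : ℕ} (p : n.Partition) {i : ℕ} (hi : i ∈ p.parts) :
    i ∈ Icc 1 n :=
  Finset.mem_Icc.mpr ⟨p.parts_pos hi, p.parts_sum ▸ Multiset.le_sum_of_mem hi⟩

theorem Nat.Partition.prod_map_parts {M : Type*} [CommMonoid M] {n : ℕ} (p : n.Partition)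
    (f : ℕ → M) : (p.parts.map f).prod = ∏ i ∈ Icc 1 n, f i ^ p.parts.count i := by
  rw [Finset.prod_multiset_map_count]
  refine Finset.prod_subset (fun i hi ↦ p.mem_Icc_of_mem_parts (Multiset.mem_toFinset.mp hi))
    fun i _ hi ↦ ?_
  rw [Multiset.count_eq_zero_of_notMem (mt Multiset.mem_toFinset.mpr hi), pow_zero]

theorem Multiset.prod_count_factorial_mul_countPerms {s : Multiset ℕ} {t : Finset ℕ}
    (hst : ∀ i ∈ s, i ∈ t) : (∏ i ∈ t, (s.count i)!) * s.countPerms = s.card ! := by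
  have h := Nat.multinomial_spec t (Multiset.toFinsupp s)
  simp only [Multiset.toFinsupp_apply, Multiset.sum_count_eq_card hst] at h
  rwa [Multiset.countPerms, Finsupp.multinomial_eq_of_support_subset (s := t)
      (fun i hi ↦ hst i (Multiset.mem_toFinset.mp hi))]

namespace PowerSeries

variable {R : Type*} [CommRing R]

theorem coeff_pow_eq_zero_of_lt {g : R⟦X⟧} (hg : constantCoeff g = 0) {n k : ℕ} (h : n < k) :
    coeff n (g ^ k) = 0 := by
  obtain ⟨g, rfl⟩ := X_dvd_iff.mpr hg
  rw [mul_pow, coeff_X_pow_mul', if_neg (by omega)]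

theorem coeff_subst_mul {g : R⟦X⟧} (hg : constantCoeff g = 0) (f G : R⟦X⟧) (n : ℕ) :
    coeff n (f.subst g * G) = ∑ k ∈ range (n + 1), coeff k f * coeff n (g ^ k * G) := by
  have hcoeff (a : ℕ) (ha : a ≤ n) :
      coeff a (f.subst g) = ∑ k ∈ range (n + 1), coeff k f * coeff a (g ^ k) := by
    rw [coeff_subst' (HasSubst.of_constantCoeff_zero' hg),
      finsum_eq_sum_of_support_subset (s := range (n + 1))]
    · simp only [smul_eq_mul]
    · intro k hk
      by_contra hkn
      rw [Finset.coe_range, Set.mem_Iio, not_lt] at hkn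
      exact hk (by simp [coeff_pow_eq_zero_of_lt hg (show a < k by omega)])
  simp_rw [coeff_mul, Finset.mul_sum]
  rw [Finset.sum_comm]
  refine Finset.sum_congr rfl fun ab hab ↦ ?_
  rw [hcoeff ab.1 (by rw [HasAntidiagonal.mem_antidiagonal] at hab; omega), Finset.sum_mul]
  exact Finset.sum_congr rfl fun k _ ↦ mul_assoc _ _ _

theorem coeff_subst_eq_sum {g : R⟦X⟧} (hg : constantCoeff g = 0) (f : R⟦X⟧) (n : ℕ) :
    coeff n (f.subst g) = ∑ k ∈ range (n + 1), coeff k f * coeff n (g ^ k) := by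
  simpa using coeff_subst_mul hg f 1 n

theorem coeff_X_mul_derivative (f : R⟦X⟧) (k : ℕ) : coeff k (X * d⁄dX R f) = k • coeff k f := by
  cases k with
  | zero => simp
  | succ k => simp [coeff_derivative, mul_comm]

section Lagrange

variable {w u : R⟦X⟧}

theorem derivative_eq_neg_sq_mul_of_mul_eq_one (hwu : w * u = 1) :
    d⁄dX R u = -(u ^ 2 * d⁄dX R w) := by
  have h := congrArg (d⁄dX R) hwu
  rw [Derivation.leibniz, derivative_one, smul_eq_mul, smul_eq_mul] at h
  linear_combination u * h - d⁄dX R u * hwu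

theorem nsmul_pow_mul_derivative_add (hwu : w * u = 1) (m : ℕ) :
    (m + 1) • (u ^ (m + 2) * d⁄dX R (X * w)) + X * d⁄dX R (u ^ (m + 1))
      = (m + 1) • u ^ (m + 1) := by
  rw [Derivation.leibniz, derivative_X, derivative_pow, derivative_eq_neg_sq_mul_of_mul_eq_one hwu,
    smul_eq_mul, smul_eq_mul, nsmul_eq_mul, nsmul_eq_mul]
  push_cast
  linear_combination ((m : R⟦X⟧) + 1) * u ^ (m + 1) * hwu

theorem nsmul_coeff_pow_mul_derivative_add (hwu : w * u = 1) (m k : ℕ) :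
    (m + 1) • coeff k (u ^ (m + 2) * d⁄dX R (X * w)) + k • coeff k (u ^ (m + 1))
      = (m + 1) • coeff k (u ^ (m + 1)) := by
  simpa only [map_add, map_nsmul, coeff_X_mul_derivative] using
    congrArg (coeff k) (nsmul_pow_mul_derivative_add hwu m)

theorem coeff_pow_mul_pow_mul_derivative [IsAddTorsionFree R] (hwu : w * u = 1) {k N : ℕ}
    (hk : k ≤ N) :
    coeff N ((X * w) ^ k * (u ^ (N + 1) * d⁄dX R (X * w))) = if k = N then 1 else 0 := by
  obtain ⟨d, rfl⟩ := Nat.exists_eq_add_of_le hk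
  have hwu_pow : w ^ k * u ^ k = 1 := by rw [← mul_pow, hwu, one_pow]
  have hprod : (X * w) ^ k * (u ^ (k + d + 1) * d⁄dX R (X * w))
      = X ^ k * (u ^ (d + 1) * d⁄dX R (X * w)) := by
    rw [mul_pow, pow_add, pow_add]
    linear_combination (X ^ k * u ^ (d + 1) * d⁄dX R (X * w)) * hwu_pow
  rw [hprod, add_comm k d, coeff_X_pow_mul]
  rcases d with _ | d
  · have hu : constantCoeff u * constantCoeff w = 1 := by
      rw [← map_mul, mul_comm, hwu, map_one]
    simp [Derivation.leibniz, hu]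
  · have h := nsmul_coeff_pow_mul_derivative_add hwu d (d + 1)
    rw [add_eq_right, nsmul_eq_zero_iff_right d.succ_ne_zero] at h
    simpa using h

theorem nsmul_coeff_succ_eq_coeff_pow_of_subst_eq_X [IsAddTorsionFree R] (hwu : w * u = 1)
    {g : R⟦X⟧} (hg : g.subst (X * w) = X) (n : ℕ) :
    (n + 1) • coeff (n + 1) g = coeff n (u ^ (n + 1)) := by
  set G := u ^ (n + 2) * d⁄dX R (X * w)
  have hg_coeff : coeff (n + 1) g = coeff n G := by
    have h := coeff_subst_mul (show constantCoeff (X * w) = 0 by simp) g G (n + 1)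
    rw [hg, coeff_succ_X_mul, Finset.sum_congr rfl fun k hk ↦ congrArg _
      (coeff_pow_mul_pow_mul_derivative hwu (Finset.mem_range_succ_iff.mp hk))] at h
    simpa using h.symm
  rw [hg_coeff]
  linear_combination nsmul_coeff_pow_mul_derivative_add hwu n n

end Lagrange

theorem prod_map_monomial (s : Multiset ℕ) (c : ℕ → R) :
    (s.map fun i ↦ monomial i (c i)).prod = monomial s.sum (s.map c).prod := by
  induction s using Multiset.induction_on with
  | empty => simp
  | cons a s ih => simp [ih, monomial_mul_monomial]

theorem coeff_pow_eq_of_X_pow_dvd_sub {f g : R⟦X⟧} {n : ℕ} (h : X ^ (n + 1) ∣ f - g) (j : ℕ) :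
    coeff n (f ^ j) = coeff n (g ^ j) := by
  have hdvd := X_pow_dvd_iff.mp (h.trans (sub_dvd_pow_sub_pow f g j)) n n.lt_succ_self
  rwa [map_sub, sub_eq_zero] at hdvd

theorem X_pow_succ_dvd_sub_sum_monomial {A : R⟦X⟧} (hA : constantCoeff A = 0) (n : ℕ) :
    X ^ (n + 1) ∣ A - ∑ i ∈ Icc 1 n, monomial i (coeff i A) := by
  refine X_pow_dvd_iff.mpr fun m hm ↦ ?_
  rw [map_sub, map_sum]
  simp only [coeff_monomial, Finset.sum_ite_eq, mem_Icc]
  rcases m with _ | m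
  · simp [hA]
  · rw [if_pos (by omega), sub_self]

theorem coeff_pow_eq_sum_partitions {A : R⟦X⟧} (hA : constantCoeff A = 0) (j n : ℕ) :
    coeff n (A ^ j) = ∑ p : n.Partition with p.parts.card = j,
      p.parts.countPerms • (p.parts.map fun i ↦ coeff i A).prod := by
  rw [coeff_pow_eq_of_X_pow_dvd_sub (X_pow_succ_dvd_sub_sum_monomial hA n), Finset.sum_pow,
    map_sum]
  simp only [prod_map_monomial, ← nsmul_eq_mul, map_nsmul, coeff_monomial, smul_ite, smul_zero]
  rw [← Finset.sum_filter]
  symm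
  refine Finset.sum_bij (fun p hp ↦ ⟨p.parts, (Finset.mem_filter.mp hp).2⟩) ?_ ?_ ?_ ?_
  · intro p _
    exact Finset.mem_filter.mpr
      ⟨Finset.mem_sym_iff.mpr fun i ↦ p.mem_Icc_of_mem_parts, p.parts_sum.symm⟩
  · intro p _ q _ hpq
    exact Nat.Partition.ext (congrArg Subtype.val hpq)
  · intro k hk
    obtain ⟨hk, hsum⟩ := Finset.mem_filter.mp hk
    exact ⟨⟨k.val, fun hi ↦ (Finset.mem_Icc.mp (Finset.mem_sym_iff.mp hk _ hi)).1, hsum.symm⟩,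
      Finset.mem_filter.mpr ⟨Finset.mem_univ _, k.2⟩, rfl⟩
  · intro p _
    rfl

theorem coeff_pow_succ_eq_sum_choose_of_mul_one_sub {A u : R⟦X⟧} (hA : constantCoeff A = 0)
    (hu : (1 - A) * u = 1) (d n : ℕ) :
    coeff n (u ^ (d + 1)) = ∑ j ∈ range (n + 1), (d + j).choose d • coeff n (A ^ j) := by
  have hA' : HasSubst A := HasSubst.of_constantCoeff_zero' hA
  set S : R⟦X⟧ := (mk fun j ↦ ((d + j).choose d : R)).subst A
  have hS : S * (1 - A) ^ (d + 1) = 1 := by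
    have h := congrArg (subst A) (mk_add_choose_mul_one_sub_pow_eq_one (S := R) (d := d))
    rwa [← coe_substAlgHom hA', map_mul, map_pow, map_sub, map_one, coe_substAlgHom,
      subst_X hA'] at h
  have hpow : u ^ (d + 1) = S := by
    have hu_pow : (1 - A) ^ (d + 1) * u ^ (d + 1) = 1 := by rw [← mul_pow, hu, one_pow]
    linear_combination S * hu_pow - u ^ (d + 1) * hS
  rw [hpow, coeff_subst_eq_sum hA]
  simp [nsmul_eq_mul]

theorem coeff_pow_succ_eq_sum_partitions_of_mul_one_sub {A u : R⟦X⟧} (hA : constantCoeff A = 0)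
    (hu : (1 - A) * u = 1) (d n : ℕ) :
    coeff n (u ^ (d + 1)) = ∑ p : n.Partition,
      ((d + p.parts.card).choose d * p.parts.countPerms) • (p.parts.map fun i ↦ coeff i A).prod := by
  rw [coeff_pow_succ_eq_sum_choose_of_mul_one_sub hA hu]
  simp_rw [coeff_pow_eq_sum_partitions hA, Finset.smul_sum, smul_smul]
  rw [← Finset.sum_fiberwise_of_maps_to (g := fun p : n.Partition ↦ p.parts.card)
    fun p _ ↦ Finset.mem_range_succ_iff.mpr p.card_parts_le]
  refine Finset.sum_congr rfl fun j _ ↦ Finset.sum_congr rfl fun p hp ↦ ?_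
  rw [(Finset.mem_filter.mp hp).2]

end PowerSeries

theorem PS.comp_eq_subst {R : Type*} [CommRing R] {g : R⟦X⟧} (hg : constantCoeff g = 0)
    (f : R⟦X⟧) : PS.comp f g = f.subst g := by
  ext n
  rw [PS.comp, coeff_mk, coeff_subst_eq_sum hg]

theorem Pcoeff_add_two (N : ℕ) (p : N.Partition) :
    Pcoeff (N + 2) p = (N + 1 : ℚ)⁻¹ * ((N + p.parts.card).choose N * p.parts.countPerms : ℕ) := by
  have hperms := Multiset.prod_count_factorial_mul_countPerms fun _ ↦ p.mem_Icc_of_mem_parts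
  have hchoose := Nat.add_choose_mul_factorial_mul_factorial p.parts.card N
  rw [add_comm p.parts.card] at hchoose
  show ((N + p.parts.card)! : ℚ) / (((N + 1)! : ℚ) * ∏ i ∈ Icc 1 N, ((p.parts.count i)! : ℚ)) = _
  rw [← hchoose, ← hperms, Nat.factorial_succ]
  have : ((∏ i ∈ Icc 1 N, (p.parts.count i)! : ℕ) : ℚ) ≠ 0 := by positivity
  push_cast at this ⊢
  field_simp

noncomputable def eSeries : PowerSeries (Polynomial ℚ) :=
  mk fun i ↦ if i = 0 then 0 else eOpen (i + 2)

theorem constantCoeff_eSeries : constantCoeff eSeries = 0 := by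
  simp [eSeries]

theorem fSeries_eq : fSeries = X * (1 - eSeries) := by
  ext n
  rcases n with _ | _ | n <;> simp [fSeries, eSeries, coeff_one]

theorem constantCoeff_fSeries : constantCoeff fSeries = 0 := by
  simp [fSeries]

theorem isUnit_coeff_one_fSeries : IsUnit (coeff 1 fSeries) := by
  simp [fSeries]

theorem eDelta_add_two_eq_coeff_pow {u : PowerSeries (Polynomial ℚ)} (hu : (1 - eSeries) * u = 1)
    (N : ℕ) : eDelta (N + 2) = (N + 1 : ℚ)⁻¹ • coeff N (u ^ (N + 1)) := by
  rw [coeff_pow_succ_eq_sum_partitions_of_mul_one_sub constantCoeff_eSeries hu, Finset.smul_sum]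
  refine Finset.sum_congr rfl fun p _ ↦ ?_
  have hmap : p.parts.map (fun i ↦ coeff i eSeries) = p.parts.map (fun i ↦ eOpen (i + 2)) :=
    Multiset.map_congr rfl fun i hi ↦ by simp [eSeries, (p.parts_pos hi).ne']
  rw [Pcoeff_add_two, ← smul_smul, Nat.cast_smul_eq_nsmul, hmap, Nat.Partition.prod_map_parts]

theorem fDeltaSeries_eq_substInvOfIsUnit :
    fDeltaSeries = fSeries.substInvOfIsUnit isUnit_coeff_one_fSeries := by
  obtain ⟨u, hu⟩ : ∃ u, (1 - eSeries) * u = 1 :=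
    IsUnit.exists_right_inv (by simp [isUnit_iff_constantCoeff, constantCoeff_eSeries])
  set g := fSeries.substInvOfIsUnit isUnit_coeff_one_fSeries
  have hg : g.subst (X * (1 - eSeries)) = X := by
    rw [← fSeries_eq]
    exact subst_substInvOfIsUnit_left _ constantCoeff_fSeries _
  have hg_coeff (n : ℕ) : coeff (n + 1) g = (n + 1 : ℚ)⁻¹ • coeff n (u ^ (n + 1)) := by
    rw [← nsmul_coeff_succ_eq_coeff_pow_of_subst_eq_X hu hg, ← Nat.cast_smul_eq_nsmul ℚ,
      smul_smul]
    push_cast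
    rw [inv_mul_cancel₀ (by positivity), one_smul]
  ext n
  rcases n with _ | _ | N
  · simp [fDeltaSeries, g]
  · have hu0 : constantCoeff u = 1 := by
      simpa [constantCoeff_eSeries] using congrArg constantCoeff hu
    simp [fDeltaSeries, hg_coeff 0, hu0]
  · rw [hg_coeff (N + 1), ← eDelta_add_two_eq_coeff_pow hu (N + 1)]
    simp [fDeltaSeries]

theorem main_inversion :
    PS.comp fSeries fDeltaSeries = PowerSeries.X ∧
    PS.comp fDeltaSeries fSeries = PowerSeries.X := by
  rw [fDeltaSeries_eq_substInvOfIsUnit, PS.comp_eq_subst (constantCoeff_substInvOfIsUnit _ _),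
    PS.comp_eq_subst constantCoeff_fSeries]
  exact ⟨subst_substInvOfIsUnit_right _ constantCoeff_fSeries _,
    subst_substInvOfIsUnit_left _ constantCoeff_fSeries _⟩
end

section
/- Define a_{n,2} as the coefficient of q^{n-5} in the polynomial e_\delta(n) = \sum_{\lambda\vdash n-2} P(\lambda)\prod_i e(i+2)^{\lambda_i} (notation as before, with e(m) = \prod_{j=2}^{m-2}(q-j) of degree m-3, so e_\delta(n) has degree n-3 and a_{n,i} is (-1)^i times the coefficient of q^{n-3-i}). Then a_{n,2} = \binom{n-1}{4} for all n \ge 5. -/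
/-!
Group the partitions `λ ⊢ n - 2` by their number `k` of parts. Orbit–stabiliser for the
permutations of `Fin k` acting on ordered tuples shows that `k! / ∏ᵢ λᵢ!` is the number of
compositions of `n - 2` with underlying multiset `λ`, so the `k`-part piece of `e_δ(n)` is
`(n - 2 + k)! / ((n - 1)! k!)` times a sum over compositions `c` of `∏ⱼ e(cⱼ + 2)`. That product
is monic of degree `n - 2 - k` with roots `2, …, cⱼ`, so its coefficient of `q^(n-5)` vanishes
for `k ≥ 4` and is `(-1)^(3-k) e_{3-k}` of its roots for `k ≤ 3`. The three surviving sums are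
explicit polynomials in `n` adding up to `C(n-1, 4)`.
-/

open Finset

open Polynomial Equiv MulAction
open scoped Nat

theorem count_map_univ_eq_card_fiber {α ι : Type*} [DecidableEq α] [Fintype ι] (x : ι → α)
    (a : α) : (univ.val.map x).count a = Fintype.card {i // x i = a} := by
  rw [Multiset.count_map, Fintype.card_subtype, ← Finset.filter_val, Finset.card_val]
  simp only [eq_comm]

theorem orbit_domMulAct_perm_eq {α ι : Type*} [DecidableEq α] [Fintype ι] [DecidableEq ι]
    (x : ι → α) : orbit (Perm ι)ᵈᵐᵃ x = {y | univ.val.map y = univ.val.map x} := by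
  ext y
  constructor
  · rintro ⟨σ, rfl⟩
    show univ.val.map (x ∘ ⇑(DomMulAct.mk.symm σ)) = _
    rw [← Multiset.map_map x, Multiset.map_univ_val_equiv]
  · intro hy
    have hfiber (a : α) : {i // y i = a} ≃ {i // x i = a} :=
      Fintype.equivOfCardEq <| by
        rw [← count_map_univ_eq_card_fiber, ← count_map_univ_eq_card_fiber, Set.mem_ofPred.mp hy]
    exact ⟨DomMulAct.mk (ofFiberEquiv hfiber), funext (ofFiberEquiv_map hfiber)⟩

theorem factorial_eq_ncard_mul_prod_factorial_count {α : Type*} [DecidableEq α] {k : ℕ}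
    (s : Multiset α) (hs : Multiset.card s = k) :
    k ! = {y : Fin k → α | univ.val.map y = s}.ncard * ∏ a ∈ s.toFinset, (s.count a)! := by
  obtain ⟨x, rfl⟩ : ∃ x : Fin k → α, univ.val.map x = s := by
    subst hs
    refine ⟨fun i => s.toList[i.val]'(by simp), ?_⟩
    conv_rhs => rw [← Multiset.coe_toList s]
    rw [Fin.univ_val_map, Multiset.coe_eq_coe]
    exact List.Perm.of_eq (List.ext_getElem (by simp) fun _ _ _ => by simp)
  have hstab : Nat.card (stabilizer (Perm (Fin k))ᵈᵐᵃ x) =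
      ∏ a ∈ (univ.val.map x).toFinset, ((univ.val.map x).count a)! := by
    rw [Nat.card_congr (Equiv.subtypeEquiv (q := fun g : Perm (Fin k) => x ∘ ⇑g = x)
      DomMulAct.mk.symm fun _ => DomMulAct.mem_stabilizer_iff),
      Nat.card_eq_fintype_card, DomMulAct.stabilizer_card']
    exact prod_congr rfl fun a _ => by rw [count_map_univ_eq_card_fiber]
  rw [← orbit_domMulAct_perm_eq, ← index_stabilizer, ← hstab, mul_comm, Subgroup.card_mul_index,
    Nat.card_congr DomMulAct.mk.symm, Nat.card_perm, Nat.card_eq_fintype_card, Fintype.card_fin]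

theorem Nat.Partition.card_parts_le_s13 {M : ℕ} (p : M.Partition) : Multiset.card p.parts ≤ M := by
  simpa [p.parts_sum] using Multiset.card_nsmul_le_sum fun _ h => p.parts_pos h

theorem Nat.Partition.prod_Icc_count {β : Type*} [CommMonoid β] {M : ℕ} (p : M.Partition)
    (g : ℕ → ℕ → β) (hg : ∀ i, g i 0 = 1) :
    ∏ i ∈ Icc 1 M, g i (p.parts.count i) = ∏ a ∈ p.parts.toFinset, g a (p.parts.count a) := by
  refine (prod_subset (fun a ha => ?_) fun a _ ha => ?_).symm
  · have ha := Multiset.mem_toFinset.mp ha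
    exact mem_Icc.mpr ⟨p.parts_pos ha, p.le_of_mem_parts ha⟩
  · rw [Multiset.count_eq_zero.mpr (mt Multiset.mem_toFinset.mpr ha), hg]

def compositionTuples (k M : ℕ) : Finset (Fin k → ℕ) :=
  {x ∈ Finset.Nat.antidiagonalTuple k M | ∀ i, 0 < x i}

theorem mem_compositionTuples_of_map_eq {k M : ℕ} (p : M.Partition) {y : Fin k → ℕ}
    (hy : univ.val.map y = p.parts) : y ∈ compositionTuples k M := by
  refine mem_filter.mpr ⟨Finset.Nat.mem_antidiagonalTuple.mpr ?_, fun i => p.parts_pos ?_⟩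
  · rw [Finset.sum_eq_multiset_sum, hy, p.parts_sum]
  · rw [← hy]; exact Multiset.mem_map_of_mem _ (mem_univ i)

theorem card_filter_compositionTuples {k M : ℕ} (p : M.Partition)
    (hp : Multiset.card p.parts = k) :
    (#{x ∈ compositionTuples k M | univ.val.map x = p.parts} : ℚ) =
      k ! / ∏ i ∈ Icc 1 M, ((p.parts.count i)! : ℚ) := by
  have hset : (↑({x ∈ compositionTuples k M | univ.val.map x = p.parts}) : Set (Fin k → ℕ)) =
      {y | univ.val.map y = p.parts} := by
    ext y
    simpa using fun hy => mem_compositionTuples_of_map_eq p hy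
  have hcount : {y : Fin k → ℕ | univ.val.map y = p.parts}.ncard *
      ∏ i ∈ Icc 1 M, (p.parts.count i)! = k ! := by
    rw [p.prod_Icc_count (fun _ c => c !) fun _ => rfl,
      factorial_eq_ncard_mul_prod_factorial_count p.parts hp]
  rw [eq_div_iff (by positivity), ← Set.ncard_coe_finset, hset]
  exact_mod_cast hcount

theorem sum_partition_inv_prod_factorial_count_smul {V : Type*} [AddCommMonoid V] [Module ℚ V]
    (F : Multiset ℕ → V) (k M : ℕ) :
    ∑ p : M.Partition with Multiset.card p.parts = k,
        (∏ i ∈ Icc 1 M, ((p.parts.count i)! : ℚ))⁻¹ • F p.parts =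
      (k ! : ℚ)⁻¹ • ∑ x ∈ compositionTuples k M, F (univ.val.map x) := by
  have hmaps : ∀ x ∈ compositionTuples k M, univ.val.map x ∈
      ({p : M.Partition | Multiset.card p.parts = k} : Finset _).image Nat.Partition.parts := by
    intro x hx
    obtain ⟨hsum, hpos⟩ := mem_filter.mp hx
    refine mem_image.mpr ⟨⟨univ.val.map x, ?_, ?_⟩, by simp, rfl⟩
    · simpa using fun i => hpos i
    · rw [← Finset.sum_eq_multiset_sum, Finset.Nat.mem_antidiagonalTuple.mp hsum]
  rw [← sum_fiberwise_of_maps_to hmaps, sum_image fun p _ q _ h => Nat.Partition.ext h, smul_sum]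
  refine sum_congr rfl fun p hp => ?_
  rw [sum_congr rfl fun x hx => by rw [(mem_filter.mp hx).2], sum_const,
    ← Nat.cast_smul_eq_nsmul ℚ, smul_smul, card_filter_compositionTuples p (mem_filter.mp hp).2]
  congr 1
  field_simp

theorem sum_compositionTuples_eq_sum_antidiagonalTuple {β : Type*} [AddCommMonoid β]
    {k M : ℕ} (hk : k ≤ M) (f : (Fin k → ℕ) → β) :
    ∑ x ∈ compositionTuples k M, f x =
      ∑ r ∈ Finset.Nat.antidiagonalTuple k (M - k), f (r + 1) := by
  symm
  refine sum_nbij' (· + 1) (· - 1) (fun r hr => ?_) (fun x hx => ?_) (fun r _ => ?_)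
    (fun x hx => ?_) fun _ _ => rfl
  · have hr := Finset.Nat.mem_antidiagonalTuple.mp (mem_coe.mp hr)
    refine mem_filter.mpr ⟨Finset.Nat.mem_antidiagonalTuple.mpr ?_, fun i => by simp⟩
    simp [sum_add_distrib, hr, hk]
  · obtain ⟨hx, hpos⟩ := mem_filter.mp (mem_coe.mp hx)
    rw [Finset.Nat.mem_antidiagonalTuple] at hx ⊢
    simp only [Pi.sub_apply, Pi.one_apply]
    rw [sum_tsub_distrib _ fun i _ => hpos i, hx]
    simp
  · ext i; simp
  · obtain ⟨-, hpos⟩ := mem_filter.mp (mem_coe.mp hx)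
    ext i; exact Nat.sub_add_cancel (hpos i)

theorem card_antidiagonalTuple (k n : ℕ) :
    #(Finset.Nat.antidiagonalTuple k n) = k.multichoose n := by
  rw [← piAntidiag_univ_fin_eq_antidiagonalTuple, ← map_sym_eq_piAntidiag, card_map, sym_univ,
    card_univ, Sym.card_sym_fin_eq_multichoose]

theorem eDelta_eq_sum_compositionTuples (n : ℕ) :
    eDelta n = ∑ k ∈ range (n - 2 + 1), ((n - 2 + k)! / ((n - 1)! * k ! : ℚ)) •
      ∑ x ∈ compositionTuples k (n - 2), ∏ i, eOpen (x i + 2) := by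
  have hterm (p : (n - 2).Partition) :
      Pcoeff n p • ∏ i ∈ Icc 1 (n - 2), eOpen (i + 2) ^ p.parts.count i =
        ((n - 2 + Multiset.card p.parts)! / (n - 1)! : ℚ) •
          (∏ i ∈ Icc 1 (n - 2), ((p.parts.count i)! : ℚ))⁻¹ •
            (p.parts.map fun i => eOpen (i + 2)).prod := by
    rw [smul_smul, Pcoeff, ← div_div, div_eq_mul_inv _ (∏ i ∈ _, _),
      p.prod_Icc_count (fun i c => eOpen (i + 2) ^ c) fun _ => pow_zero _,
      Finset.prod_multiset_map_count]
  have hcard : ∀ p ∈ (univ : Finset (n - 2).Partition),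
      Multiset.card p.parts ∈ range (n - 2 + 1) :=
    fun p _ => mem_range.mpr (Nat.lt_succ_of_le p.card_parts_le_s13)
  rw [eDelta, Fintype.sum_congr _ _ hterm, ← sum_fiberwise_of_maps_to hcard]
  refine sum_congr rfl fun k _ => ?_
  rw [sum_congr rfl fun p hp => by rw [(mem_filter.mp hp).2], ← smul_sum,
    sum_partition_inv_prod_factorial_count_smul (fun s => (s.map fun i => eOpen (i + 2)).prod),
    smul_smul, ← div_div, div_eq_mul_inv _ (k ! : ℚ)]
  congr 1
  exact sum_congr rfl fun x _ => by rw [Multiset.map_map, prod_map_val]; rfl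

theorem Multiset.esymm_zero {R : Type*} [CommSemiring R] (s : Multiset R) : s.esymm 0 = 1 := by
  simp [Multiset.esymm]

theorem Multiset.esymm_one {R : Type*} [CommSemiring R] (s : Multiset R) : s.esymm 1 = s.sum := by
  simp [Multiset.esymm, Multiset.powersetCard_one]

theorem Multiset.esymm_cons_succ {R : Type*} [CommSemiring R] (a : R) (s : Multiset R) (j : ℕ) :
    (a ::ₘ s).esymm (j + 1) = s.esymm (j + 1) + a * s.esymm j := by
  simp [Multiset.esymm, Multiset.powersetCard_cons, Multiset.sum_map_mul_left]

def openRoots (r : ℕ) : Multiset ℚ := (Icc 2 (r + 1)).val.map (↑)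

theorem card_openRoots (r : ℕ) : Multiset.card (openRoots r) = r := by simp [openRoots]

theorem openRoots_succ (r : ℕ) : openRoots (r + 1) = ((r : ℚ) + 2) ::ₘ openRoots r := by
  rw [openRoots, ← insert_Icc_right_eq_Icc_add_one (by omega), insert_val_of_notMem (by simp),
    Multiset.map_cons, openRoots]
  push_cast
  ring_nf

theorem eOpen_add_three (r : ℕ) : eOpen (r + 3) = ((openRoots r).map (X - C ·)).prod := by
  rw [eOpen, show r + 3 - 2 = r + 1 by omega, prod_eq_multiset_prod, openRoots, Multiset.map_map]
  simp

theorem sum_openRoots (r : ℕ) : (openRoots r).sum = r * (r + 3) / 2 := by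
  induction r with
  | zero => simp [openRoots]
  | succ r ih => rw [openRoots_succ, Multiset.sum_cons, ih]; push_cast; ring

theorem esymm_two_openRoots (r : ℕ) :
    (openRoots r).esymm 2 = r * (r - 1) * (3 * r ^ 2 + 17 * r + 26) / 24 := by
  induction r with
  | zero => simp [openRoots, Multiset.esymm, Multiset.powersetCard_zero_right]
  | succ r ih =>
    rw [openRoots_succ, Multiset.esymm_cons_succ, Multiset.esymm_one, ih, sum_openRoots]
    push_cast
    ring

theorem prod_eOpen_add_three {k : ℕ} (r : Fin k → ℕ) :
    ∏ i, eOpen (r i + 3) = ((univ.val.bind fun i => openRoots (r i)).map (X - C ·)).prod := by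
  rw [Multiset.map_bind, Multiset.prod_bind, prod_map_val]
  exact prod_congr rfl fun i _ => eOpen_add_three (r i)

theorem card_bind_openRoots {k : ℕ} (r : Fin k → ℕ) :
    Multiset.card (univ.val.bind fun i => openRoots (r i)) = ∑ i, r i := by
  rw [Multiset.card_bind, sum_map_val]
  exact sum_congr rfl fun i _ => card_openRoots (r i)

theorem coeff_prod_eOpen_add_three {k j : ℕ} (r : Fin k → ℕ) (hj : j ≤ ∑ i, r i) :
    (∏ i, eOpen (r i + 3)).coeff (∑ i, r i - j) =
      (-1) ^ j * (univ.val.bind fun i => openRoots (r i)).esymm j := by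
  rw [prod_eOpen_add_three, Multiset.prod_X_sub_C_coeff _ (by rw [card_bind_openRoots]; omega),
    card_bind_openRoots, Nat.sub_sub_self hj]

theorem natDegree_prod_eOpen_add_three {k : ℕ} (r : Fin k → ℕ) :
    (∏ i, eOpen (r i + 3)).natDegree = ∑ i, r i := by
  rw [prod_eOpen_add_three, natDegree_multiset_prod_X_sub_C_eq_card, card_bind_openRoots]

theorem coeff_sum_compositionTuples {k M d j : ℕ} (h : d + j + k = M) :
    (∑ x ∈ compositionTuples k M, ∏ i, eOpen (x i + 2)).coeff d =
      (-1) ^ j * ∑ r ∈ Finset.Nat.antidiagonalTuple k (d + j),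
        (univ.val.bind fun i => openRoots (r i)).esymm j := by
  rw [finsetSum_coeff, sum_compositionTuples_eq_sum_antidiagonalTuple (by omega),
    show M - k = d + j by omega, mul_sum]
  refine sum_congr rfl fun r hr => ?_
  have hr := Finset.Nat.mem_antidiagonalTuple.mp hr
  rw [show d = ∑ i, r i - j by omega]
  exact coeff_prod_eOpen_add_three r (by omega)

theorem coeff_sum_compositionTuples_eq_zero {k M d : ℕ} (hk : k ≤ M) (hd : M < d + k) :
    (∑ x ∈ compositionTuples k M, ∏ i, eOpen (x i + 2)).coeff d = 0 := by
  rw [finsetSum_coeff, sum_compositionTuples_eq_sum_antidiagonalTuple hk]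
  refine sum_eq_zero fun r hr => coeff_eq_zero_of_natDegree_lt ?_
  rw [Finset.Nat.mem_antidiagonalTuple] at hr
  simp only [Pi.add_apply, Pi.one_apply, add_assoc, natDegree_prod_eOpen_add_three, hr]
  omega

theorem sum_antidiagonalTuple_one_esymm (N j : ℕ) :
    ∑ r ∈ Finset.Nat.antidiagonalTuple 1 N, (univ.val.bind fun i => openRoots (r i)).esymm j =
      (openRoots N).esymm j := by
  simp

theorem sum_range_sum_openRoots (N : ℕ) :
    ∑ i ∈ range (N + 1), (openRoots i).sum = N * (N + 1) * (N + 5) / 6 := by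
  induction N with
  | zero => simp [openRoots]
  | succ N ih => rw [sum_range_succ, ih, sum_openRoots]; push_cast; ring

theorem sum_antidiagonalTuple_two_esymm_one (N : ℕ) :
    ∑ r ∈ Finset.Nat.antidiagonalTuple 2 N, (univ.val.bind fun i => openRoots (r i)).esymm 1 =
      N * (N + 1) * (N + 5) / 3 := by
  have hswap : ∑ p ∈ antidiagonal N, (openRoots p.2).sum =
      ∑ p ∈ antidiagonal N, (openRoots p.1).sum :=
    Finset.Nat.sum_antidiagonal_swap (f := fun p => (openRoots p.1).sum)
  calc _ = ∑ p ∈ antidiagonal N, ((openRoots p.1).sum + (openRoots p.2).sum) := by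
        rw [Finset.Nat.antidiagonalTuple_two, sum_map]
        exact sum_congr rfl fun p _ => by simp [Multiset.esymm_one, Multiset.sum_bind]
    _ = 2 * ∑ i ∈ range (N + 1), (openRoots i).sum := by
        rw [sum_add_distrib, hswap, Finset.Nat.sum_antidiagonal_eq_sum_range_succ_mk]
        ring
    _ = N * (N + 1) * (N + 5) / 3 := by
        rw [sum_range_sum_openRoots]
        ring

theorem sum_antidiagonalTuple_three_esymm_zero (N : ℕ) :
    ∑ r ∈ Finset.Nat.antidiagonalTuple 3 N, (univ.val.bind fun i => openRoots (r i)).esymm 0 =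
      (N + 1) * (N + 2) / 2 := by
  simp only [Multiset.esymm_zero, sum_const, card_antidiagonalTuple, nsmul_eq_mul, mul_one]
  induction N with
  | zero => simp
  | succ N ih =>
    rw [Nat.multichoose_succ_succ, Nat.multichoose_two, Nat.cast_add, ih]
    push_cast
    ring

theorem cast_choose_four (m : ℕ) :
    ((m + 4).choose 4 : ℚ) = (m + 1) * (m + 2) * (m + 3) * (m + 4) / 24 := by
  rw [Nat.cast_choose ℚ (by omega : 4 ≤ m + 4), Nat.add_sub_cancel]
  push_cast [Nat.factorial_succ]
  field_simp
  ring

theorem betti_two (n : ℕ) (hn : 5 ≤ n) :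
    (eDelta n).coeff (n - 5) = (Nat.choose (n - 1) 4 : ℚ) := by
  obtain ⟨m, rfl⟩ : ∃ m, n = m + 5 := ⟨n - 5, by omega⟩
  rw [eDelta_eq_sum_compositionTuples, finsetSum_coeff]
  simp only [coeff_smul, smul_eq_mul, Nat.add_sub_cancel, show m + 5 - 2 = m + 3 by omega,
    show m + 5 - 1 = m + 4 by omega]
  rw [show range (m + 3 + 1) = range (4 + m) by congr 1; omega, sum_range_add,
    sum_eq_zero (s := range m) fun k hk => by
      rw [coeff_sum_compositionTuples_eq_zero (by simp at hk; omega) (by omega), mul_zero],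
    add_zero]
  simp only [sum_range_succ, sum_range_zero]
  have hzero : compositionTuples 0 (m + 3) = ∅ := by simp [compositionTuples]
  rw [hzero, sum_empty, coeff_zero, coeff_sum_compositionTuples (k := 1) (j := 2) (by omega),
    coeff_sum_compositionTuples (k := 2) (j := 1) (by omega),
    coeff_sum_compositionTuples (k := 3) (j := 0) (by omega), sum_antidiagonalTuple_one_esymm,
    sum_antidiagonalTuple_two_esymm_one, sum_antidiagonalTuple_three_esymm_zero,
    esymm_two_openRoots, cast_choose_four]
  push_cast [Nat.factorial_succ]
  field_simp
  ring
end

section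
/- With the same notation, the coefficient of q^{n-4} in e_\delta(n) is 0 for all n \ge 4 (equivalently a_{n,1} = 0), and the leading coefficient (of q^{n-3}) is 1 (equivalently a_{n,0} = 1). -/
open Finset

/-!
Each `∏ᵢ e(i+2)^{λᵢ}` is monic of degree `(n - 2) - ℓ(λ)`, where `ℓ(λ)` is the number of parts.
Hence only `λ = (n-2)` reaches degree `n - 3`, with `P = 1` and leading coefficient `1`. In
degree `n - 4` the one-part term contributes the subleading coefficient
`-∑_{j=2}^{n-2} j = -n(n-3)/2` of `e(n)`, and each two-part partition contributes `P(λ)`, which is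
`n` or `n/2` according to whether the two parts differ. Counting a two-part partition
`{b, n-2-b}` once per ordered choice of `b ∈ [1, n-3]`, these sum to `(n-3) · n/2`, and the two
contributions cancel.
-/

open Polynomial

namespace Nat.Partition

variable {m : ℕ}

theorem prod_Icc_count_eq_prod_toFinset {M : Type*} [CommMonoid M] (lam : m.Partition)
    (g : ℕ → ℕ → M) (hg : ∀ i, g i 0 = 1) :
    ∏ i ∈ Icc 1 m, g i (lam.parts.count i) =
      ∏ i ∈ lam.parts.toFinset, g i (lam.parts.count i) := by
  refine (prod_subset (fun i hi => ?_) fun i _ hi => ?_).symm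
  · have hi := Multiset.mem_toFinset.mp hi
    exact mem_Icc.mpr ⟨lam.parts_pos hi, le_of_mem_parts hi⟩
  · rw [Multiset.count_eq_zero_of_notMem (by simpa using hi), hg]

theorem prod_Icc_pow_count {M : Type*} [CommMonoid M] (lam : m.Partition) (f : ℕ → M) :
    ∏ i ∈ Icc 1 m, f i ^ lam.parts.count i = (lam.parts.map f).prod := by
  rw [prod_multiset_map_count, prod_Icc_count_eq_prod_toFinset lam (f · ^ ·) fun _ => pow_zero _]

theorem card_parts_pos (hm : m ≠ 0) (lam : m.Partition) : 0 < lam.parts.card := by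
  refine Multiset.card_pos.mpr fun h => hm ?_
  rw [← lam.parts_sum, h, Multiset.sum_zero]

theorem card_parts_eq_one_iff (hm : m ≠ 0) {lam : m.Partition} :
    lam.parts.card = 1 ↔ lam = indiscrete m := by
  refine ⟨fun h => ?_, fun h => by simp [h, hm]⟩
  obtain ⟨a, ha⟩ := Multiset.card_eq_one.mp h
  have hsum := lam.parts_sum
  rw [ha, Multiset.sum_singleton] at hsum
  ext1
  rw [ha, indiscrete_parts hm, hsum]

/-- For `1 ≤ b < n` this is the partition `{b, n - b}`; the `min` only makes the parts sum to `n`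
for every `b`. -/
def pair (n b : ℕ) : n.Partition :=
  ofSums n {min b n, n - b} <| by
    simp only [Multiset.insert_eq_cons, Multiset.sum_cons, Multiset.sum_singleton]; omega

theorem pair_parts {b : ℕ} (hb : b ∈ Icc 1 (m - 1)) : (pair m b).parts = {b, m - b} := by
  rw [mem_Icc] at hb
  rw [pair, ofSums_parts, min_eq_left (by omega), Multiset.filter_eq_self]
  simp only [Multiset.insert_eq_cons, Multiset.mem_cons, Multiset.mem_singleton]
  omega

theorem pair_eq_iff {lam : m.Partition} {a c : ℕ} (h : lam.parts = {a, c}) {b : ℕ} :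
    b ∈ Icc 1 (m - 1) ∧ pair m b = lam ↔ b ∈ lam.parts := by
  have ha := lam.parts_pos (i := a) (by simp [h])
  have hc := lam.parts_pos (i := c) (by simp [h])
  have hsum := lam.parts_sum
  simp only [h, Multiset.insert_eq_cons, Multiset.sum_cons, Multiset.sum_singleton] at hsum
  constructor
  · rintro ⟨hb, rfl⟩
    simp [pair_parts hb]
  · intro hb
    simp only [h, Multiset.insert_eq_cons, Multiset.mem_cons, Multiset.mem_singleton] at hb
    have hbI : b ∈ Icc 1 (m - 1) := mem_Icc.mpr (by omega)
    refine ⟨hbI, Nat.Partition.ext ?_⟩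
    rw [pair_parts hbI, h]
    rcases hb with rfl | rfl
    · rw [show m - b = c by omega]
    · rw [show m - b = a by omega, Multiset.pair_comm]

theorem sum_card_toFinset_of_card_eq_two :
    ∑ lam ∈ univ.filter (fun lam : m.Partition => lam.parts.card = 2), lam.parts.toFinset.card
      = m - 1 := by
  have hmaps : ∀ b ∈ Icc 1 (m - 1),
      pair m b ∈ univ.filter (fun lam : m.Partition => lam.parts.card = 2) := fun b hb =>
    mem_filter.mpr ⟨mem_univ _, by simp [pair_parts hb]⟩
  rw [show m - 1 = #(Icc 1 (m - 1)) by simp, card_eq_sum_card_fiberwise hmaps]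
  refine sum_congr rfl fun lam hlam => ?_
  obtain ⟨a, c, h⟩ := Multiset.card_eq_two.mp (mem_filter.mp hlam).2
  congr 1
  ext b
  rw [mem_filter, Multiset.mem_toFinset, pair_eq_iff h]

end Nat.Partition

open Nat.Partition

theorem Multiset.card_toFinset_mul_prod_factorial_count {α : Type*} [DecidableEq α]
    {s : Multiset α} (h : s.card = 2) :
    s.toFinset.card * ∏ i ∈ s.toFinset, (s.count i).factorial = 2 := by
  obtain ⟨a, c, rfl⟩ := Multiset.card_eq_two.mp h
  by_cases hac : a = c
  · subst hac; simp [Multiset.insert_eq_cons]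
  · simp [Multiset.insert_eq_cons, Finset.card_pair hac, Finset.prod_pair hac, hac, Ne.symm hac]

theorem eOpen_eq_prod_X_sub_C (m : ℕ) : eOpen m = ∏ j ∈ Icc 2 (m - 2), (X - C (j : ℚ)) := by
  simp [eOpen]

theorem monic_eOpen (m : ℕ) : (eOpen m).Monic := by
  rw [eOpen_eq_prod_X_sub_C]
  exact monic_prod_of_monic _ _ fun j _ => monic_X_sub_C _

theorem natDegree_eOpen (m : ℕ) : (eOpen m).natDegree = m - 3 := by
  rw [eOpen_eq_prod_X_sub_C, natDegree_prod_of_monic _ _ fun j _ => monic_X_sub_C _]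
  simp only [natDegree_X_sub_C, sum_const, smul_eq_mul, mul_one, Nat.card_Icc]
  omega

theorem two_mul_sum_Icc_two (k : ℕ) : 2 * ∑ j ∈ Icc 2 (k + 1), (j : ℚ) = k * (k + 3) := by
  induction k with
  | zero => simp
  | succ k ih =>
    rw [sum_Icc_succ_top (by omega), mul_add, ih]
    push_cast
    ring

theorem coeff_eOpen_sub_four {m : ℕ} (hm : 4 ≤ m) :
    (eOpen m).coeff (m - 4) = -(m * (m - 3) / 2 : ℚ) := by
  obtain ⟨k, rfl⟩ : ∃ k, m = k + 3 := ⟨m - 3, by omega⟩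
  have hnext : (eOpen (k + 3)).nextCoeff = -∑ j ∈ Icc 2 (k + 1), (j : ℚ) :=
    eOpen_eq_prod_X_sub_C (k + 3) ▸ prod_X_sub_C_nextCoeff _
  rw [nextCoeff_of_natDegree_pos (by rw [natDegree_eOpen]; omega), natDegree_eOpen] at hnext
  rw [show k + 3 - 4 = k + 3 - 3 - 1 by omega, hnext, neg_inj, eq_div_iff two_ne_zero, mul_comm,
    two_mul_sum_Icc_two]
  push_cast
  ring

section eProd

variable {m : ℕ}

/-- `∏ᵢ e(i+2)^{λᵢ}`, written as a product over the parts of `λ`. -/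
noncomputable def eProd (lam : m.Partition) : ℚ[X] :=
  (lam.parts.map fun i => eOpen (i + 2)).prod

theorem monic_eProd (lam : m.Partition) : (eProd lam).Monic :=
  monic_multiset_prod_of_monic _ _ fun i _ => monic_eOpen (i + 2)

theorem natDegree_eProd_add_card (lam : m.Partition) :
    (eProd lam).natDegree + lam.parts.card = m := by
  have hpart : ∀ i ∈ lam.parts, (eOpen (i + 2)).natDegree + 1 = i := fun i hi => by
    have := lam.parts_pos hi
    rw [natDegree_eOpen]
    omega
  rw [eProd, natDegree_multiset_prod_of_monic _ fun f hf => by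
    obtain ⟨i, -, rfl⟩ := Multiset.mem_map.mp hf
    exact monic_eOpen _, Multiset.map_map]
  calc (lam.parts.map fun i => (eOpen (i + 2)).natDegree).sum + lam.parts.card
      = (lam.parts.map fun i => (eOpen (i + 2)).natDegree + 1).sum := by
        simp [Multiset.sum_map_add]
    _ = lam.parts.sum := by rw [Multiset.map_congr rfl hpart, Multiset.map_id']
    _ = m := lam.parts_sum

theorem coeff_eProd_sub_card (lam : m.Partition) :
    (eProd lam).coeff (m - lam.parts.card) = 1 := by
  have := natDegree_eProd_add_card lam
  rw [show m - lam.parts.card = (eProd lam).natDegree by omega]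
  exact monic_eProd lam

theorem coeff_eProd_sub_of_lt {k : ℕ} (lam : m.Partition) (hk : k < lam.parts.card) :
    (eProd lam).coeff (m - k) = 0 := by
  have := natDegree_eProd_add_card lam
  exact coeff_eq_zero_of_natDegree_lt (by omega)

theorem eProd_indiscrete (hm : m ≠ 0) : eProd (indiscrete m) = eOpen (m + 2) := by
  simp [eProd, hm]

end eProd

theorem coeff_eDelta (n d : ℕ) :
    (eDelta n).coeff d = ∑ lam : (n - 2).Partition, Pcoeff n lam * (eProd lam).coeff d := by
  simp only [eDelta, finsetSum_coeff, coeff_smul, smul_eq_mul, prod_Icc_pow_count,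
    eProd]

theorem Pcoeff_eq {n : ℕ} (lam : (n - 2).Partition) :
    Pcoeff n lam = ((n - 2 + lam.parts.card).factorial : ℚ) /
      ((n - 1).factorial * ∏ i ∈ lam.parts.toFinset, (lam.parts.count i).factorial) := by
  rw [Pcoeff, ← Nat.cast_prod, lam.prod_Icc_count_eq_prod_toFinset (fun _ k => k.factorial)
    fun _ => Nat.factorial_zero, Nat.cast_prod]

theorem Pcoeff_indiscrete {n : ℕ} (hn : 3 ≤ n) : Pcoeff n (indiscrete (n - 2)) = 1 := by
  have hm : n - 2 ≠ 0 := by omega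
  rw [Pcoeff_eq, indiscrete_parts hm]
  simp [show n - 2 + 1 = n - 1 by omega, Nat.factorial_ne_zero]

theorem Pcoeff_of_card_eq_two {n : ℕ} (hn : 2 ≤ n) {lam : (n - 2).Partition}
    (h : lam.parts.card = 2) : Pcoeff n lam = n / 2 * lam.parts.toFinset.card := by
  have hcount : (lam.parts.toFinset.card : ℚ) *
      ∏ i ∈ lam.parts.toFinset, ((lam.parts.count i).factorial : ℚ) = 2 := by
    exact_mod_cast Multiset.card_toFinset_mul_prod_factorial_count h
  rw [Pcoeff_eq, h, show n - 2 + 2 = n by omega, ← Nat.mul_factorial_pred (by omega : n ≠ 0)]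
  have : ∏ i ∈ lam.parts.toFinset, ((lam.parts.count i).factorial : ℚ) ≠ 0 := by positivity
  push_cast
  field_simp
  linear_combination -hcount

theorem sum_Pcoeff_of_card_eq_two {n : ℕ} (hn : 3 ≤ n) :
    ∑ lam ∈ univ.filter (fun lam : (n - 2).Partition => lam.parts.card = 2), Pcoeff n lam
      = n * (n - 3) / 2 := by
  rw [sum_congr rfl fun lam hlam => Pcoeff_of_card_eq_two (by omega) (mem_filter.mp hlam).2,
    ← mul_sum, ← Nat.cast_sum, sum_card_toFinset_of_card_eq_two,
    show n - 2 - 1 = n - 3 by omega, Nat.cast_sub hn]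
  push_cast
  ring

theorem Pcoeff_mul_coeff_eProd_sub_three {n : ℕ} (hn : 3 ≤ n) (lam : (n - 2).Partition) :
    Pcoeff n lam * (eProd lam).coeff (n - 3) =
      if lam = indiscrete (n - 2) then 1 else 0 := by
  have hm : n - 2 ≠ 0 := by omega
  rw [show n - 3 = n - 2 - 1 by omega]
  split_ifs with h
  · have hcard : lam.parts.card = 1 := (card_parts_eq_one_iff hm).mpr h
    rw [h, Pcoeff_indiscrete hn, one_mul, ← h, ← hcard]
    exact coeff_eProd_sub_card lam
  · have hcard : 1 < lam.parts.card := by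
      have := card_parts_pos hm lam
      have := (card_parts_eq_one_iff hm).not.mpr h
      omega
    rw [coeff_eProd_sub_of_lt lam hcard, mul_zero]

theorem Pcoeff_mul_coeff_eProd_sub_four {n : ℕ} (hn : 4 ≤ n) (lam : (n - 2).Partition) :
    Pcoeff n lam * (eProd lam).coeff (n - 4) =
      (if lam = indiscrete (n - 2) then (eOpen n).coeff (n - 4) else 0) +
        if lam.parts.card = 2 then Pcoeff n lam else 0 := by
  have hm : n - 2 ≠ 0 := by omega
  rw [show n - 4 = n - 2 - 2 by omega]
  by_cases h1 : lam.parts.card = 1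
  · have h := (card_parts_eq_one_iff hm).mp h1
    rw [if_pos h, if_neg (by omega), h, Pcoeff_indiscrete (by omega), eProd_indiscrete hm,
      show n - 2 + 2 = n by omega]
    ring
  have h : lam ≠ indiscrete (n - 2) := (card_parts_eq_one_iff hm).not.mp h1
  by_cases h2 : lam.parts.card = 2
  · have hlead := coeff_eProd_sub_card lam
    rw [h2] at hlead
    rw [if_neg h, if_pos h2, hlead]
    ring
  · have := card_parts_pos hm lam
    rw [if_neg h, if_neg h2, coeff_eProd_sub_of_lt lam (by omega)]
    ring

theorem betti_zero_one (n : ℕ) (hn : 4 ≤ n) :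
    (eDelta n).coeff (n - 4) = 0 ∧ (eDelta n).coeff (n - 3) = 1 := by
  constructor
  · rw [coeff_eDelta, sum_congr rfl fun lam _ => Pcoeff_mul_coeff_eProd_sub_four hn lam,
      sum_add_distrib, sum_ite_eq', if_pos (mem_univ _), ← sum_filter,
      sum_Pcoeff_of_card_eq_two (by omega), coeff_eOpen_sub_four hn]
    ring
  · rw [coeff_eDelta, sum_congr rfl fun lam _ => Pcoeff_mul_coeff_eProd_sub_three (by omega) lam,
      sum_ite_eq', if_pos (mem_univ _)]
end
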